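/- The function f_max(x) = (2√3/π)·log(2 cosh((π/(2√3))·x)) is 1-Lipschitz, satisfies f_max(x) > |x| for all x, ∫_ℝ (f_max(x) - |x|) dx = 1, and F(f_max) = ∫_ℝ φ(f_max'(x)) dx = π/√3, where φ(x) = log 2 - (1/2)((1+x)log(1+x)+(1-x)log(1-x)). -/

import Mathlib

/-!
Writing `2 cosh u = e^{|u|} (1 + e^{-2|u|})` shows that `f_max - |·|` is a rescaling of
`log (1 + e^{-2|t|}) > 0`. Expanding `-log (1 - e^{-at}) = ∑ e^{-ant} / n` and integrating term by
term gives `∫₀^∞ -log (1 - e^{-at}) dt = ζ(2) / a`, so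
`∫₀^∞ log (1 + e^{-2t}) dt = π²/12 - π²/24 = π²/24`. Next, `φ (tanh u) = log (2 cosh u) - u tanh u`
splits as `log (1 + e^{-2|u|}) + |u| (1 - tanh |u|)`, and since the derivative of
`log (1 + e^{-2t})` is `-(1 - tanh t)`, integrating by parts gives both terms the same integral over
`(0, ∞)`. Hence `∫ φ (tanh u) du = π²/6`. The scale `c = π/(2√3)` satisfies `c² = π²/12`, which
makes the area equal to `1` and the energy equal to `2c = π/√3`.
-/

open MeasureTheory Real Set Filter Topology

theorem Real.continuous_tanh : Continuous tanh := by
  simp only [funext tanh_eq_sinh_div_cosh]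
  exact continuous_sinh.div continuous_cosh fun t => (cosh_pos t).ne'

theorem log_two_mul_cosh (t : ℝ) : log (2 * cosh t) = t + log (1 + exp (-(2 * t))) := by
  have h : 2 * cosh t = exp t * (1 + exp (-(2 * t))) := by
    rw [cosh_eq, mul_add, ← exp_add]; ring_nf
  rw [h, log_mul (exp_ne_zero _) (by positivity), log_exp]

theorem log_one_add_exp_pos (t : ℝ) : 0 < log (1 + exp t) :=
  log_pos (by linarith [exp_pos t])

theorem log_one_add_exp_le (t : ℝ) : log (1 + exp t) ≤ exp t := by
  linarith [log_le_sub_one_of_pos (x := 1 + exp t) (by positivity)]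

theorem abs_lt_log_two_mul_cosh (u : ℝ) : |u| < log (2 * cosh u) := by
  rw [← cosh_abs, log_two_mul_cosh]
  linarith [log_one_add_exp_pos (-(2 * |u|))]

theorem one_sub_tanh_le (t : ℝ) : 1 - tanh t ≤ 2 * exp (-(2 * t)) := by
  have h : 1 - tanh t = 2 * exp (-t) / (exp t + exp (-t)) := by
    rw [tanh_eq]; field_simp; ring
  calc 1 - tanh t ≤ 2 * exp (-t) / exp t := by
        rw [h]; gcongr; linarith [exp_pos (-t)]
    _ = 2 * exp (-(2 * t)) := by
        rw [mul_div_assoc, ← exp_sub]; ring_nf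

theorem mul_exp_neg_two_mul_le (t : ℝ) : t * exp (-(2 * t)) ≤ exp (-t) := by
  calc t * exp (-(2 * t)) ≤ exp t * exp (-(2 * t)) := by
        gcongr; linarith [add_one_le_exp t]
    _ = exp (-t) := by rw [← exp_add]; ring_nf

theorem hasDerivAt_log_two_mul_cosh (u : ℝ) :
    HasDerivAt (fun u => log (2 * cosh u)) (tanh u) u := by
  convert ((hasDerivAt_cosh u).const_mul 2).log (by positivity) using 1
  rw [tanh_eq_sinh_div_cosh]; field_simp

theorem log_two_sub_entropy_tanh (u : ℝ) :
    log 2 - 1 / 2 * ((1 + tanh u) * log (1 + tanh u) + (1 - tanh u) * log (1 - tanh u)) =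
      log (2 * cosh u) - u * tanh u := by
  have hc := cosh_pos u
  have h1p : 1 + tanh u = exp u / cosh u := by
    rw [tanh_eq_sinh_div_cosh, ← cosh_add_sinh u]; field_simp
  have h1m : 1 - tanh u = exp (-u) / cosh u := by
    rw [tanh_eq_sinh_div_cosh, ← cosh_sub_sinh u]; field_simp
  rw [h1p, h1m, log_div (exp_ne_zero u) hc.ne', log_div (exp_ne_zero (-u)) hc.ne', log_exp,
    log_exp, log_mul two_ne_zero hc.ne', tanh_eq_sinh_div_cosh, sinh_eq]
  field_simp
  rw [cosh_eq]; ring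

theorem hasSum_one_div_nat_add_one_sq :
    HasSum (fun n : ℕ => 1 / ((n : ℝ) + 1) ^ 2) (π ^ 2 / 6) := by
  simpa using (hasSum_nat_add_iff' 1).mpr hasSum_zeta_two

theorem integral_neg_log_one_sub_exp_Ioi {a : ℝ} (ha : 0 < a) :
    ∫ t in Ioi 0, -log (1 - exp (-(a * t))) = π ^ 2 / (6 * a) := by
  set F : ℕ → ℝ → ℝ := fun n t => exp (-(a * (n + 1)) * t) / (n + 1)
  have hF_int (n : ℕ) : IntegrableOn (F n) (Ioi 0) :=
    (integrableOn_exp_mul_Ioi (by nlinarith) 0).div_const _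
  have hF_integral (n : ℕ) : ∫ t in Ioi 0, F n t = 1 / a * (1 / ((n : ℝ) + 1) ^ 2) := by
    rw [integral_div, integral_exp_mul_Ioi (by nlinarith), mul_zero, exp_zero]
    field_simp
  have hF_norm (n : ℕ) : ∫ t in Ioi 0, ‖F n t‖ = ∫ t in Ioi 0, F n t :=
    integral_congr_ae (ae_of_all _ fun t => norm_of_nonneg (by positivity))
  have hsum := hasSum_one_div_nat_add_one_sq.mul_left (1 / a)
  have hlim := hasSum_integral_of_summable_integral_norm hF_int
    (by simpa only [hF_norm, hF_integral] using hsum.summable)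
  have hseries : ∀ t ∈ Ioi (0 : ℝ), ∑' n, F n t = -log (1 - exp (-(a * t))) := by
    intro t ht
    have hx : |exp (-(a * t))| < 1 := by
      rw [abs_of_pos (exp_pos _), exp_lt_one_iff]; nlinarith [mem_Ioi.1 ht]
    refine ((hasSum_pow_div_log_of_abs_lt_one hx).congr_fun fun n => ?_).tsum_eq
    simp only [F, ← exp_nat_mul]; push_cast; ring_nf
  rw [← setIntegral_congr_fun measurableSet_Ioi hseries, ← hlim.tsum_eq]
  simp only [hF_integral, hsum.tsum_eq]
  field_simp

theorem integrableOn_neg_log_one_sub_exp_Ioi {a : ℝ} (ha : 0 < a) :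
    IntegrableOn (fun t => -log (1 - exp (-(a * t)))) (Ioi 0) :=
  -- a non-integrable function has Bochner integral `0`
  Integrable.of_integral_ne_zero <| by
    rw [integral_neg_log_one_sub_exp_Ioi ha]; positivity

theorem log_one_add_exp_neg_two_mul_eq {t : ℝ} (ht : 0 < t) :
    log (1 + exp (-(2 * t))) = -log (1 - exp (-(2 * t))) - -log (1 - exp (-(4 * t))) := by
  have hx : exp (-(2 * t)) < 1 := exp_lt_one_iff.2 (by linarith)
  have hsq : exp (-(4 * t)) = exp (-(2 * t)) ^ 2 := by rw [← exp_nat_mul]; ring_nf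
  rw [hsq, show 1 - exp (-(2 * t)) ^ 2 = (1 - exp (-(2 * t))) * (1 + exp (-(2 * t))) by ring,
    log_mul (by linarith) (by positivity)]
  ring

theorem integrableOn_log_one_add_exp_neg_Ioi :
    IntegrableOn (fun t => log (1 + exp (-(2 * t)))) (Ioi 0) :=
  ((integrableOn_neg_log_one_sub_exp_Ioi two_pos).sub
    (integrableOn_neg_log_one_sub_exp_Ioi four_pos)).congr_fun
    (fun _ ht => (log_one_add_exp_neg_two_mul_eq ht).symm) measurableSet_Ioi

theorem integral_log_one_add_exp_neg_Ioi :
    ∫ t in Ioi 0, log (1 + exp (-(2 * t))) = π ^ 2 / 24 := by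
  rw [setIntegral_congr_fun measurableSet_Ioi fun _ ht => log_one_add_exp_neg_two_mul_eq ht,
    integral_sub (integrableOn_neg_log_one_sub_exp_Ioi two_pos)
      (integrableOn_neg_log_one_sub_exp_Ioi four_pos),
    integral_neg_log_one_sub_exp_Ioi two_pos, integral_neg_log_one_sub_exp_Ioi four_pos]
  ring

theorem integrableOn_mul_one_sub_tanh_Ioi :
    IntegrableOn (fun t => t * (1 - tanh t)) (Ioi 0) := by
  refine ((integrableOn_exp_neg_Ioi 0).const_mul 2).mono'
    (continuous_id.mul (continuous_const.sub continuous_tanh)).aestronglyMeasurable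
    ((ae_restrict_iff' measurableSet_Ioi).2 (ae_of_all _ fun t ht => ?_))
  have ht : 0 ≤ t := le_of_lt ht
  rw [norm_of_nonneg (mul_nonneg ht (by linarith [tanh_lt_one t]))]
  calc t * (1 - tanh t) ≤ t * (2 * exp (-(2 * t))) := by gcongr; exact one_sub_tanh_le t
    _ ≤ 2 * exp (-t) := by linarith [mul_exp_neg_two_mul_le t]

theorem integral_mul_one_sub_tanh_Ioi :
    ∫ t in Ioi 0, t * (1 - tanh t) = ∫ t in Ioi 0, log (1 + exp (-(2 * t))) := by
  have hderiv (t : ℝ) : HasDerivAt (fun t => t * log (1 + exp (-(2 * t))))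
      (log (1 + exp (-(2 * t))) - t * (1 - tanh t)) t := by
    have h : HasDerivAt (fun t => t * (log (2 * cosh t) - t))
        (1 * (log (2 * cosh t) - t) + t * (tanh t - 1)) t :=
      (hasDerivAt_id' t).mul ((hasDerivAt_log_two_mul_cosh t).sub (hasDerivAt_id' t))
    simp only [log_two_mul_cosh, add_sub_cancel_left] at h
    convert h using 1; ring
  have hlim : Tendsto (fun t => t * log (1 + exp (-(2 * t)))) atTop (𝓝 0) := by
    refine squeeze_zero' ?_ ?_ tendsto_exp_neg_atTop_nhds_zero
    · filter_upwards [eventually_ge_atTop 0] with t ht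
      exact mul_nonneg ht (log_one_add_exp_pos _).le
    · filter_upwards [eventually_ge_atTop 0] with t ht
      calc t * log (1 + exp (-(2 * t))) ≤ t * exp (-(2 * t)) := by
            gcongr; exact log_one_add_exp_le _
        _ ≤ exp (-t) := mul_exp_neg_two_mul_le t
  have h := integral_Ioi_of_hasDerivAt_of_tendsto' (fun t _ => hderiv t)
    (integrableOn_log_one_add_exp_neg_Ioi.sub integrableOn_mul_one_sub_tanh_Ioi) hlim
  rw [integral_sub integrableOn_log_one_add_exp_neg_Ioi integrableOn_mul_one_sub_tanh_Ioi] at h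
  simp only [zero_mul, sub_zero] at h
  linarith

theorem integral_log_two_mul_cosh_sub_abs : ∫ u, (log (2 * cosh u) - |u|) = π ^ 2 / 12 := by
  have h (u : ℝ) : log (2 * cosh u) - |u| = log (1 + exp (-(2 * |u|))) := by
    rw [← cosh_abs, log_two_mul_cosh]; ring
  simp_rw [h]
  rw [integral_comp_abs (f := fun t => log (1 + exp (-(2 * t)))), integral_log_one_add_exp_neg_Ioi]
  ring

theorem integral_log_two_mul_cosh_sub_mul_tanh :
    ∫ u, (log (2 * cosh u) - u * tanh u) = π ^ 2 / 6 := by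
  have h (u : ℝ) : log (2 * cosh u) - u * tanh u =
      log (1 + exp (-(2 * |u|))) + |u| * (1 - tanh |u|) := by
    have hodd : u * tanh u = |u| * tanh |u| := by
      rcases abs_cases u with ⟨hu, _⟩ | ⟨hu, _⟩ <;> simp [hu, tanh_neg]
    rw [← cosh_abs, log_two_mul_cosh, hodd]; ring
  simp_rw [h]
  rw [integral_comp_abs (f := fun t => log (1 + exp (-(2 * t))) + t * (1 - tanh t)),
    integral_add integrableOn_log_one_add_exp_neg_Ioi integrableOn_mul_one_sub_tanh_Ioi,
    integral_mul_one_sub_tanh_Ioi, integral_log_one_add_exp_neg_Ioi]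
  ring

/-- The function `f_max(x) = (2√3/π) log(2 cosh((π/(2√3)) x))` is
1-Lipschitz, satisfies `f_max(x) > |x|` for all `x`, the area between its graph and
that of `|·|` equals 1, and its energy `∫ φ(f_max'(x)) dx` equals `π/√3`, where
`φ(x) = log 2 - (1/2)((1+x)log(1+x)+(1-x)log(1-x))`. -/
theorem stmt19 (φ fmax : ℝ → ℝ)
    (hφ : ∀ x, φ x = Real.log 2 -
      (1 / 2) * ((1 + x) * Real.log (1 + x) + (1 - x) * Real.log (1 - x)))
    (hfmax : ∀ x, fmax x = (2 * Real.sqrt 3 / π) *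
      Real.log (2 * Real.cosh ((π / (2 * Real.sqrt 3)) * x))) :
    LipschitzWith 1 fmax ∧
    (∀ x, |x| < fmax x) ∧
    (∫ x : ℝ, (fmax x - |x|)) = 1 ∧
    (∀ x, HasDerivAt fmax (Real.tanh ((π / (2 * Real.sqrt 3)) * x)) x) ∧
    (∫ x : ℝ, φ (Real.tanh ((π / (2 * Real.sqrt 3)) * x))) = π / Real.sqrt 3 := by
  set c := π / (2 * √3) with hc_def
  have hc : 0 < c := by positivity
  have hc_sq : c ^ 2 = π ^ 2 / 12 := by
    rw [div_pow, mul_pow, sq_sqrt (by norm_num : (0 : ℝ) ≤ 3)]; ring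
  have hfmax' (x : ℝ) : fmax x = c⁻¹ * log (2 * cosh (c * x)) := by rw [hfmax, inv_div]
  have hderiv (x : ℝ) : HasDerivAt fmax (tanh (c * x)) x := by
    rw [funext hfmax']
    exact (((hasDerivAt_log_two_mul_cosh (c * x)).comp x
      ((hasDerivAt_id' x).const_mul c)).const_mul c⁻¹).congr_deriv (by field_simp)
  refine ⟨?_, fun x => ?_, ?_, hderiv, ?_⟩
  · refine lipschitzWith_of_nnnorm_deriv_le (fun x => (hderiv x).differentiableAt) fun x => ?_
    rw [(hderiv x).deriv, ← NNReal.coe_le_coe, coe_nnnorm, norm_eq_abs]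
    exact (abs_tanh_lt_one _).le
  · have h := abs_lt_log_two_mul_cosh (c * x)
    rw [abs_mul, abs_of_pos hc] at h
    calc |x| = c⁻¹ * (c * |x|) := by field_simp
      _ < fmax x := by rw [hfmax']; gcongr
  · calc ∫ x, (fmax x - |x|) = ∫ x, c⁻¹ * (log (2 * cosh (c * x)) - |c * x|) := by
          congr 1; funext x
          rw [hfmax', abs_mul, abs_of_pos hc]; field_simp
      _ = 1 := by
          rw [integral_const_mul, Measure.integral_comp_mul_left (fun u => log (2 * cosh u) - |u|),
            integral_log_two_mul_cosh_sub_abs, smul_eq_mul, abs_of_pos (inv_pos.2 hc), ← hc_sq]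
          field_simp
  · simp_rw [hφ, log_two_sub_entropy_tanh]
    rw [Measure.integral_comp_mul_left (fun u => log (2 * cosh u) - u * tanh u),
      integral_log_two_mul_cosh_sub_mul_tanh, smul_eq_mul, abs_of_pos (inv_pos.2 hc), hc_def]
    have h3 : √3 ^ 2 = 3 := sq_sqrt (by norm_num)
    field_simp
    linear_combination 2 * h3
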